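/- Very radical revision equals a lexicographic revision by the negation, then a severe antiwithdrawal, then a lexicographic revision: for every total preorder C and formula P, C rad(P) is equivalent to C lex(¬P) sev(P) lex(P). -/

import Mathlib

open Set
open scoped Classical

variable {M : Type*}

namespace BeliefRevision

/-- `minSet C P`: the minimal models of `P` according to the total preorder `C`,
i.e. `C(i) ∩ Mod(P)` for the least `i` making this nonempty. -/
noncomputable def minSet : List (Set M) → Set M → Set M
  | [], _ => ∅
  | X :: rest, P => if (X ∩ P).Nonempty then X ∩ P else minSet rest P

/-- Equivalence of total preorders: same minimal models for every formula. -/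
def equivC (C C' : List (Set M)) : Prop :=
  ∀ P : Set M, minSet C P = minSet C' P

/-- A total preorder: an ordered partition (empty classes allowed) of all models. -/
def IsPartition (C : List (Set M)) : Prop :=
  C.Pairwise Disjoint ∧ C.foldr (· ∪ ·) ∅ = Set.univ

/-- Lexicographic revision. -/
def lex (C : List (Set M)) (L : Set M) : List (Set M) :=
  C.map (· ∩ L) ++ C.map (· \ L)

/-- Refinement. -/
def refi (C : List (Set M)) (R : Set M) : List (Set M) :=
  C.flatMap fun X => [X ∩ R, X \ R]

/-- Natural revision: `[C(i)∩P, C(0),...,C(i-1), C(i)\P, C(i+1),...,C(m)]`. -/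
noncomputable def natr : List (Set M) → Set M → List (Set M)
  | [], _ => []
  | X :: rest, P =>
    if (X ∩ P).Nonempty then (X ∩ P) :: (X \ P) :: rest
    else
      match natr rest P with
      | a :: r => a :: X :: r
      | [] => [X]

/-- Severe antiwithdrawal: merge classes `0..i` where `i` is least with `C(i)∩P ≠ ∅`. -/
noncomputable def sevw : List (Set M) → Set M → List (Set M)
  | [], _ => []
  | X :: rest, P =>
    if (X ∩ P).Nonempty then X :: rest
    else
      match sevw rest P with
      | a :: r => (X ∪ a) :: r
      | [] => [X]

/-- Restrained revision. -/
noncomputable def res : List (Set M) → Set M → List (Set M)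
  | [], _ => []
  | X :: rest, P =>
    if (X ∩ P).Nonempty then
      (X ∩ P) :: (X \ P) :: rest.flatMap (fun Y => [Y ∩ P, Y \ P])
    else
      match res rest P with
      | a :: r => a :: (X ∩ P) :: (X \ P) :: r
      | [] => [X ∩ P, X \ P]

/-- Very radical revision. -/
def rad (C : List (Set M)) (P : Set M) : List (Set M) :=
  C.map (· ∩ P) ++ [C.foldr (· ∪ ·) ∅ \ P]

/-- Severe revision: `[C(i)∩P, (C(0)∪...∪C(i))\P, C(i+1),...,C(m)]`. -/
noncomputable def sevr : List (Set M) → Set M → List (Set M)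
  | [], _ => []
  | X :: rest, P =>
    if (X ∩ P).Nonempty then (X ∩ P) :: (X \ P) :: rest
    else
      match sevr rest P with
      | a :: b :: r => a :: (X ∪ b) :: r
      | l => X :: l

/-- Moderate severe revision. -/
noncomputable def msev (C : List (Set M)) (P : Set M) : List (Set M) :=
  C.map (· ∩ P) ++ (sevw C P).map (· \ P)

/-- Merge `A` with the first nonempty class of the list (helper for `psev`). -/
noncomputable def mergeJ (A : Set M) : List (Set M) → List (Set M)
  | [] => [A]
  | Y :: r => if Y.Nonempty then (A ∪ Y) :: r else mergeJ A r

/-- Plain severe revision: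
`[C(i)∩P, C(0)∪...∪(C(i)\P)∪C(j), C(j+1),...,C(m)]` with `i` least with
`C(i)∩P ≠ ∅` and `j` the least index `> i` with `C(j) ≠ ∅`. -/
noncomputable def psev : List (Set M) → Set M → List (Set M)
  | [], _ => []
  | X :: rest, P =>
    if (X ∩ P).Nonempty then (X ∩ P) :: mergeJ (X \ P) rest
    else
      match psev rest P with
      | a :: b :: r => a :: (X ∪ b) :: r
      | l => X :: l

/-- Full meet revision. -/
noncomputable def full (C : List (Set M)) (P : Set M) : List (Set M) :=
  [minSet C P, Set.univ \ minSet C P]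

/-- `maxset F [F₁,...,Fₖ]`: conjoin each `Fᵢ` in order whenever consistent. -/
noncomputable def maxset : Set M → List (Set M) → Set M
  | F, [] => F
  | F, L :: rest => maxset (if (F ∩ L).Nonempty then F ∩ L else F) rest

/-- The underformula `under(S; Lₙ,...,L₁)`. -/
noncomputable def under : Set M → List (Set M) → Set M
  | _, [] => Set.univ
  | S, L :: rest =>
    if (S ∩ L).Nonempty then L ∩ under (S ∩ L) rest else L ∪ under S rest

/-- `upTo C S = C(0) ∪ ... ∪ C(i)` where `i` is least with `C(i)∩S ≠ ∅`. -/
noncomputable def upTo : List (Set M) → Set M → Set M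
  | [], _ => ∅
  | X :: rest, S => if (X ∩ S).Nonempty then X else X ∪ upTo rest S

noncomputable def longestAux : Set M → List (Set M) → Set M
  | A, [] => A
  | A, L :: rest => if (A ∩ L).Nonempty then longestAux (A ∩ L) rest else A

/-- Longest consistent conjunction of a sequence of formulas. -/
noncomputable def longest : List (Set M) → Set M
  | [] => Set.univ
  | L :: rest => longestAux L rest

/-- `rev` is a bottom-refining revision on `(C,P)`: it is a revision
(`min(C rev(P),⊤) = min(C,P)`) and, whenever `C(0)∩Mod(P) ≠ ∅`, class zero of
the result is `C(0)∩Mod(P)` and class one is `C(0)\Mod(P)`. -/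
noncomputable def BottomRefining (rev : List (Set M) → Set M → List (Set M))
    (C : List (Set M)) (P : Set M) : Prop :=
  minSet (rev C P) Set.univ = minSet C P ∧
  ((C.getD 0 ∅ ∩ P).Nonempty →
    (rev C P).getD 0 ∅ = C.getD 0 ∅ ∩ P ∧
    (rev C P).getD 1 ∅ = C.getD 0 ∅ \ P)

/-! After `lex(¬P)` every `¬P`-model is more plausible than every `P`-model, so the severe
antiwithdrawal by `P` merges all the `¬P`-models, together with the most plausible
`P`-models, into class zero and leaves the order among the `P`-models untouched. The final
lexicographic revision by `P` then produces the `P`-models in their original order followed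
by a single class of all the `¬P`-models, which is exactly `rad(P)`. -/

lemma foldr_union_append (A B : List (Set M)) :
    (A ++ B).foldr (· ∪ ·) ∅ = A.foldr (· ∪ ·) ∅ ∪ B.foldr (· ∪ ·) ∅ := by
  induction A with
  | nil => simp
  | cons X A ih => simp [ih, union_assoc]

lemma foldr_union_map_inter (C : List (Set M)) (L : Set M) :
    (C.map (· ∩ L)).foldr (· ∪ ·) ∅ = C.foldr (· ∪ ·) ∅ ∩ L := by
  induction C with
  | nil => simp
  | cons X C ih => simp [ih, union_inter_distrib_right]

lemma foldr_union_map_diff (C : List (Set M)) (L : Set M) :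
    (C.map (· \ L)).foldr (· ∪ ·) ∅ = C.foldr (· ∪ ·) ∅ \ L := by
  induction C with
  | nil => simp
  | cons X C ih => simp [ih, union_sdiff_distrib]

lemma foldr_union_lex (C : List (Set M)) (L : Set M) :
    (lex C L).foldr (· ∪ ·) ∅ = C.foldr (· ∪ ·) ∅ := by
  rw [lex, foldr_union_append, foldr_union_map_inter, foldr_union_map_diff, inter_union_sdiff]

lemma minSet_empty (C : List (Set M)) : minSet C ∅ = ∅ := by
  induction C with
  | nil => rfl
  | cons X C ih => simp [minSet, ih]

lemma minSet_singleton (X Q : Set M) : minSet [X] Q = X ∩ Q := by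
  by_cases h : (X ∩ Q).Nonempty
  · simp [minSet, h]
  · simp [minSet, not_nonempty_iff_eq_empty.mp h]

lemma minSet_cons_of_inter_eq_empty {X Q : Set M} {C : List (Set M)} (h : X ∩ Q = ∅) :
    minSet (X :: C) Q = minSet C Q := by
  rw [minSet, h, if_neg Set.not_nonempty_empty]

lemma minSet_cons_of_subset {X Q : Set M} (C : List (Set M)) (h : Q ⊆ X) :
    minSet (X :: C) Q = Q := by
  rcases Q.eq_empty_or_nonempty with rfl | hQ
  · exact minSet_empty _
  · rw [minSet, inter_eq_right.mpr h, if_pos hQ]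

lemma minSet_append (A B : List (Set M)) (Q : Set M) :
    minSet (A ++ B) Q =
      if (A.foldr (· ∪ ·) ∅ ∩ Q).Nonempty then minSet A Q else minSet B Q := by
  induction A with
  | nil => simp
  | cons X A ih =>
    by_cases hX : (X ∩ Q).Nonempty
    · simp [minSet, hX, union_inter_distrib_right]
    · simp [minSet, hX, ih, union_inter_distrib_right]

lemma minSet_map_inter (C : List (Set M)) (L Q : Set M) :
    minSet (C.map (· ∩ L)) Q = minSet C (L ∩ Q) := by
  induction C with
  | nil => rfl
  | cons X C ih => simp only [List.map_cons, minSet, inter_assoc, ih]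

lemma minSet_map_diff (C : List (Set M)) (L Q : Set M) :
    minSet (C.map (· \ L)) Q = minSet C (Q \ L) := by
  induction C with
  | nil => rfl
  | cons X C ih =>
    simp only [List.map_cons, minSet, ← inter_sdiff_right_comm, inter_sdiff_assoc, ih]

lemma minSet_lex (C : List (Set M)) (L Q : Set M) :
    minSet (lex C L) Q =
      if (C.foldr (· ∪ ·) ∅ ∩ L ∩ Q).Nonempty then minSet C (L ∩ Q)
      else minSet C (Q \ L) := by
  rw [lex, minSet_append, foldr_union_map_inter, minSet_map_inter, minSet_map_diff]

lemma minSet_rad (C : List (Set M)) (P Q : Set M) :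
    minSet (rad C P) Q =
      if (C.foldr (· ∪ ·) ∅ ∩ P ∩ Q).Nonempty then minSet C (P ∩ Q)
      else (C.foldr (· ∪ ·) ∅ \ P) ∩ Q := by
  rw [rad, minSet_append, foldr_union_map_inter, minSet_map_inter, minSet_singleton]

lemma sevw_cons_cons {X Y a : Set M} {C r : List (Set M)} {P : Set M}
    (hX : ¬(X ∩ P).Nonempty) (hY : sevw (Y :: C) P = a :: r) :
    sevw (X :: Y :: C) P = (X ∪ a) :: r := by
  rw [sevw, if_neg hX, hY]

lemma sevw_eq_upTo_cons (X : Set M) (C : List (Set M)) (P : Set M) :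
    ∃ r, sevw (X :: C) P = upTo (X :: C) P :: r := by
  induction C generalizing X with
  | nil => exact ⟨[], by by_cases hX : (X ∩ P).Nonempty <;> simp [sevw, upTo, hX]⟩
  | cons Y C ih =>
    by_cases hX : (X ∩ P).Nonempty
    · exact ⟨Y :: C, by rw [sevw, upTo, if_pos hX, if_pos hX]⟩
    · obtain ⟨r, hr⟩ := ih Y
      exact ⟨r, by rw [sevw_cons_cons hX hr]; exact congrArg (· :: r) (if_neg hX).symm⟩

lemma foldr_union_sevw (C : List (Set M)) (P : Set M) :
    (sevw C P).foldr (· ∪ ·) ∅ = C.foldr (· ∪ ·) ∅ := by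
  induction C with
  | nil => rfl
  | cons X C ih =>
    by_cases hX : (X ∩ P).Nonempty
    · rw [sevw, if_pos hX]
    cases C with
    | nil => simp [sevw, hX]
    | cons Y C =>
      obtain ⟨r, hr⟩ := sevw_eq_upTo_cons Y C P
      rw [hr] at ih
      rw [sevw_cons_cons hX hr, List.foldr_cons, List.foldr_cons, ← ih, List.foldr_cons,
        union_assoc]

lemma minSet_sevw_of_subset {P Q : Set M} (C : List (Set M)) (hQ : Q ⊆ P) :
    minSet (sevw C P) Q = minSet C Q := by
  induction C with
  | nil => rfl
  | cons X C ih =>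
    by_cases hX : (X ∩ P).Nonempty
    · rw [sevw, if_pos hX]
    have hXQ : X ∩ Q = ∅ :=
      not_nonempty_iff_eq_empty.mp fun h ↦ hX (h.mono (inter_subset_inter_right X hQ))
    cases C with
    | nil => simp [sevw, hX]
    | cons Y C =>
      obtain ⟨r, hr⟩ := sevw_eq_upTo_cons Y C P
      rw [hr] at ih
      rw [sevw_cons_cons hX hr]
      calc minSet ((X ∪ upTo (Y :: C) P) :: r) Q = minSet (upTo (Y :: C) P :: r) Q := by
            simp only [minSet, union_inter_distrib_right, hXQ, empty_union]
        _ = minSet (X :: Y :: C) Q := by rw [ih, minSet_cons_of_inter_eq_empty hXQ]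

lemma foldr_union_subset_upTo_append {A : List (Set M)} (B : List (Set M)) {P : Set M}
    (hA : ∀ X ∈ A, ¬(X ∩ P).Nonempty) : A.foldr (· ∪ ·) ∅ ⊆ upTo (A ++ B) P := by
  induction A with
  | nil => exact empty_subset _
  | cons X A ih =>
    rw [List.cons_append, upTo, if_neg (hA X List.mem_cons_self)]
    exact union_subset_union_right X (ih fun Y hY ↦ hA Y (List.mem_cons_of_mem X hY))

lemma minSet_sevw_of_subset_upTo {C : List (Set M)} {P Q : Set M} (h : Q ⊆ upTo C P) :
    minSet (sevw C P) Q = Q := by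
  cases C with
  | nil => rw [subset_empty_iff.mp h]; rfl
  | cons X C =>
    obtain ⟨r, hr⟩ := sevw_eq_upTo_cons X C P
    rw [hr]
    exact minSet_cons_of_subset r h

/-- Very radical revision equals a lexicographic revision by the negation, then
a severe antiwithdrawal, then a lexicographic revision. -/
theorem rad_eq_lex_sevw_lex (C : List (Set M)) (hC : IsPartition C) (P : Set M) :
    equivC (rad C P) (lex (sevw (lex C Pᶜ) P) P) := by
  intro Q
  rw [minSet_rad, minSet_lex, foldr_union_sevw, foldr_union_lex]
  split_ifs
  · have hcompl : ¬(C.foldr (· ∪ ·) ∅ ∩ Pᶜ ∩ (P ∩ Q)).Nonempty :=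
      fun ⟨_, hx⟩ ↦ hx.1.2 hx.2.1
    rw [minSet_sevw_of_subset _ inter_subset_left, minSet_lex, if_neg hcompl, sdiff_compl,
      inter_right_comm, inter_self]
  · have hsub : Q \ P ⊆ upTo (lex C Pᶜ) P := by
      refine subset_trans ?_ (foldr_union_subset_upTo_append _ ?_)
      · rw [foldr_union_map_inter, hC.2]
        simp
      · simp only [List.mem_map]
        rintro _ ⟨X, -, rfl⟩ ⟨x, hx⟩
        exact hx.1.2 hx.2
    rw [minSet_sevw_of_subset_upTo hsub, hC.2, ← compl_eq_univ_sdiff, inter_comm, ← sdiff_eq]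

end BeliefRevision
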